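/- arXiv:2203.06954 — 2 statements merged into one kernel-verified Lean document; each statement's English description precedes it below -/
import Mathlib

section
/- Let μ_n be a Borel measure on S_n, E ⊂ ℝ^d a Borel set, and c > 0. If for all x ∈ E ∩ S_n there exists an integer r ≥ 1 with μ_n(B(x,r))/(r/2^n)^s > c, then ν_n^s(E) ≤ (5(2+√d/2))^s μ_n(S_n)/c. -/
open Metric Set ENNReal MeasureTheory

noncomputable def shell (X : Type*) [NormedAddCommGroup X] (n : ℕ) : Set X :=
  if n = 0 then Metric.ball 0 1 else Metric.ball 0 ((2:ℝ)^n) \ Metric.ball 0 ((2:ℝ)^(n-1))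

noncomputable def nuT {X : Type*} [NormedAddCommGroup X] (s : ℝ) (n : ℕ) (E : Set X) : ℝ≥0∞ :=
  sInf { t : ℝ≥0∞ | ∃ (m : ℕ) (x : Fin m → X) (r : Fin m → ℝ),
    (∀ i, x i ∈ shell X n) ∧ (∀ i, 1 ≤ r i) ∧
    (E ∩ shell X n ⊆ ⋃ i, Metric.ball (x i) (r i)) ∧
    t = ∑ i, ENNReal.ofReal ((r i / 2^n)^s) }

noncomputable def macroDim {X : Type*} [NormedAddCommGroup X] (E : Set X) : ℝ :=
  sInf { s : ℝ | 0 ≤ s ∧ ∑' n, nuT s n E < ⊤ }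

def IsIntegerPoint {d : ℕ} (x : EuclideanSpace ℝ (Fin d)) : Prop := ∀ j, ∃ z : ℤ, x j = (z : ℝ)

def IsProperCover {d : ℕ} (n : ℕ) (E : Set (EuclideanSpace ℝ (Fin d))) {m : ℕ}
    (x : Fin m → EuclideanSpace ℝ (Fin d)) (r : Fin m → ℕ) : Prop :=
  (∀ i, x i ∈ shell (EuclideanSpace ℝ (Fin d)) n) ∧ (∀ i, IsIntegerPoint (x i)) ∧
  (∀ i, 1 ≤ r i) ∧ (E ∩ shell (EuclideanSpace ℝ (Fin d)) n ⊆ ⋃ i, Metric.ball (x i) ((r i : ℝ)))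

noncomputable def nuP {d : ℕ} (s : ℝ) (n : ℕ) (E : Set (EuclideanSpace ℝ (Fin d))) : ℝ≥0∞ :=
  sInf { t : ℝ≥0∞ | ∃ (m : ℕ) (x : Fin m → EuclideanSpace ℝ (Fin d)) (r : Fin m → ℕ),
    IsProperCover n E x r ∧ t = ∑ i, ENNReal.ofReal (((r i : ℝ) / 2^n)^s) }

/-!
By the Vitali `5r`-covering lemma, the balls `B(x, r_x)`, `x ∈ E ∩ Sₙ`, have a disjoint subfamily
whose fivefold enlargements cover `E ∩ Sₙ` (the radii may be capped at `2ⁿ⁺¹`, since `μ` lives on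
`Sₙ`). When `μ(Sₙ) < ∞` the subfamily is finite, each of its balls having mass at least `c 2⁻ⁿˢ`.
Moving the centre `b` of an enlarged ball `B(b, 5r)` to an integer point of `Sₙ` at distance at
most `√5 (√d + 1)` and rounding the radius up gives a proper ball of radius at most
`5 (2 + √d / 2) r`; summing `c (r / 2ⁿ)ˢ < μ(B(b, r))` over the disjoint family gives the bound.
-/

lemma mem_shell_succ_iff {X : Type*} [NormedAddCommGroup X] {k : ℕ} {x : X} :
    x ∈ shell X (k + 1) ↔ 2 ^ k ≤ ‖x‖ ∧ ‖x‖ < 2 ^ (k + 1) := by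
  simp [shell, not_lt, and_comm]

lemma exists_norm_eq_dist_eq {E : Type*} [NormedAddCommGroup E] [NormedSpace ℝ E] {b : E}
    (hb : b ≠ 0) {t : ℝ} (ht : 0 ≤ t) : ∃ p : E, ‖p‖ = t ∧ dist p b = |t - ‖b‖| := by
  have hb' : 0 < ‖b‖ := norm_pos_iff.2 hb
  refine ⟨(t / ‖b‖) • b, ?_, ?_⟩
  · rw [norm_smul, Real.norm_of_nonneg (by positivity), div_mul_cancel₀ _ hb'.ne']
  · rw [dist_eq_norm, show (t / ‖b‖) • b - b = (t / ‖b‖ - 1) • b by rw [sub_smul, one_smul],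
      norm_smul, Real.norm_eq_abs, ← abs_of_pos hb', ← abs_mul, abs_of_pos hb', sub_mul,
      div_mul_cancel₀ _ hb'.ne', one_mul]

section IntegerPoints

variable {d : ℕ}

lemma exists_isIntegerPoint_dist_le (p : EuclideanSpace ℝ (Fin d)) :
    ∃ z, IsIntegerPoint z ∧ dist z p ≤ √d / 2 := by
  set z : EuclideanSpace ℝ (Fin d) := WithLp.toLp 2 fun j => (round (p j) : ℝ)
  have hz : ∀ j, z j = round (p j) := fun j => rfl
  refine ⟨z, fun j => ⟨round (p j), hz j⟩, ?_⟩
  have hcoord : ∀ j, dist (z j) (p j) ^ 2 ≤ (1 / 2) ^ 2 := fun j => by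
    rw [hz, Real.dist_eq, abs_sub_comm]
    exact pow_le_pow_left₀ (abs_nonneg _) (abs_sub_round _) 2
  have hsum : ∑ j, dist (z j) (p j) ^ 2 ≤ d * (1 / 2) ^ 2 := by
    simpa using Finset.sum_le_card_nsmul Finset.univ _ _ fun j _ => hcoord j
  calc dist z p = √(∑ j, dist (z j) (p j) ^ 2) := EuclideanSpace.dist_eq _ _
    _ ≤ √(d * (1 / 2) ^ 2) := Real.sqrt_le_sqrt hsum
    _ = √d / 2 := by rw [Real.sqrt_mul (Nat.cast_nonneg d), Real.sqrt_sq (by norm_num)]; ring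

lemma exists_isIntegerPoint_norm_eq (j : Fin d) (m : ℕ) (b : EuclideanSpace ℝ (Fin d)) :
    ∃ z, IsIntegerPoint z ∧ ‖z‖ = m ∧ dist z b ^ 2 ≤ m ^ 2 + ‖b‖ ^ 2 := by
  set z₀ : EuclideanSpace ℝ (Fin d) := EuclideanSpace.single j (m : ℝ)
  have hz₀ : IsIntegerPoint z₀ := fun i => by
    by_cases hi : i = j
    · exact ⟨m, by simp [z₀, hi]⟩
    · exact ⟨0, by simp [z₀, hi]⟩
  have hnorm : ‖z₀‖ = m := by simp [z₀]
  -- one of `± z₀` makes a nonnegative inner product with `b`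
  rcases le_total 0 (inner ℝ z₀ b) with hpos | hneg
  · refine ⟨z₀, hz₀, hnorm, ?_⟩
    rw [dist_eq_norm, norm_sub_sq_real, hnorm]
    linarith
  · refine ⟨-z₀, fun i => ?_, by rw [norm_neg, hnorm], ?_⟩
    · obtain ⟨k, hk⟩ := hz₀ i
      exact ⟨-k, by simp [hk]⟩
    · rw [dist_eq_norm, norm_sub_sq_real, norm_neg, hnorm, inner_neg_left]
      linarith

lemma exists_isIntegerPoint_mem_shell_succ_dist_le {k : ℕ} (hk : √d + 1 ≤ 2 ^ k)
    {b : EuclideanSpace ℝ (Fin d)} (hb : b ∈ shell _ (k + 1)) :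
    ∃ z, IsIntegerPoint z ∧ z ∈ shell _ (k + 1) ∧ dist z b ≤ √d + 1 := by
  rw [mem_shell_succ_iff, pow_succ] at hb
  set τ : ℝ := 2 ^ k
  have hd : 0 ≤ √d := Real.sqrt_nonneg _
  -- move `b` radially to a sphere far enough from the boundary of the shell, then round
  set t := max (τ + √d / 2) (min ‖b‖ (2 * τ - √d / 2 - 1))
  have ht_lo : τ + √d / 2 ≤ t := le_max_left _ _
  have ht_hi : t ≤ 2 * τ - √d / 2 - 1 := max_le (by linarith) (min_le_right _ _)
  have ht_near : |t - ‖b‖| ≤ √d / 2 + 1 := by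
    have h₁ : t ≤ ‖b‖ + √d / 2 := max_le (by linarith) ((min_le_left _ _).trans (by linarith))
    have h₂ : ‖b‖ - √d / 2 - 1 ≤ t := (le_min (by linarith) (by linarith)).trans (le_max_right _ _)
    exact abs_sub_le_iff.2 ⟨by linarith, by linarith⟩
  obtain ⟨p, hpt, hpb⟩ := exists_norm_eq_dist_eq (t := t)
    (norm_pos_iff.1 (by linarith)) (by linarith)
  obtain ⟨z, hz, hzp⟩ := exists_isIntegerPoint_dist_le p
  have hzp' := abs_le.1 ((abs_norm_sub_norm_le z p).trans (dist_eq_norm z p ▸ hzp))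
  refine ⟨z, hz, mem_shell_succ_iff.2 ⟨by linarith, by rw [pow_succ]; linarith⟩, ?_⟩
  linarith [dist_triangle z p b]

lemma exists_isIntegerPoint_mem_shell_dist_le {n : ℕ} {b : EuclideanSpace ℝ (Fin d)}
    (hb : b ∈ shell _ n) : ∃ z, IsIntegerPoint z ∧ z ∈ shell _ n ∧ dist z b ≤ √5 * (√d + 1) := by
  have h5 : 1 ≤ √5 := Real.one_le_sqrt.2 (by norm_num)
  have hd : 0 ≤ √d := Real.sqrt_nonneg _
  rcases n with _ | k
  · have hb1 : ‖b‖ < 1 := by simpa [shell] using hb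
    refine ⟨0, fun j => ⟨0, by simp⟩, by simp [shell], ?_⟩
    rw [dist_zero_left]
    nlinarith
  rcases le_or_gt (√d + 1) (2 ^ k) with hthick | hthin
  · obtain ⟨z, hz, hzS, hzb⟩ := exists_isIntegerPoint_mem_shell_succ_dist_le hthick hb
    exact ⟨z, hz, hzS, hzb.trans (le_mul_of_one_le_left (by positivity) h5)⟩
  rw [mem_shell_succ_iff, pow_succ] at hb
  have hτ : (0 : ℝ) < 2 ^ k := by positivity
  obtain ⟨j⟩ : Nonempty (Fin d) := by
    by_contra h
    rw [not_nonempty_iff] at h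
    linarith [norm_eq_zero.2 (Subsingleton.elim b 0), one_le_pow₀ (M₀ := ℝ) (n := k) one_le_two]
  obtain ⟨z, hz, hzn, hzb⟩ := exists_isIntegerPoint_norm_eq j (2 ^ k) b
  push_cast at hzn hzb
  refine ⟨z, hz, mem_shell_succ_iff.2 ⟨hzn.ge, by rw [hzn, pow_succ]; linarith⟩, ?_⟩
  have : dist z b < √5 * 2 ^ k := lt_of_pow_lt_pow_left₀ 2 (by positivity) <| by
    rw [mul_pow, Real.sq_sqrt (by norm_num)]
    nlinarith
  nlinarith

lemma exists_isIntegerPoint_ball_superset {n r : ℕ} (hr : 1 ≤ r) {b : EuclideanSpace ℝ (Fin d)}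
    (hb : b ∈ shell _ n) : ∃ (z : EuclideanSpace ℝ (Fin d)) (R : ℕ), IsIntegerPoint z ∧
      z ∈ shell _ n ∧ 1 ≤ R ∧ closedBall b (5 * r) ⊆ ball z R ∧ (R : ℝ) ≤ 5 * (2 + √d / 2) * r := by
  obtain ⟨z, hz, hzS, hzb⟩ := exists_isIntegerPoint_mem_shell_dist_le hb
  set δ := √5 * (√d + 1)
  refine ⟨z, 5 * r + ⌊δ⌋₊ + 1, hz, hzS, by omega, fun y hy => ?_, ?_⟩
  · rw [mem_closedBall] at hy
    rw [mem_ball]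
    push_cast
    linarith [dist_triangle_right y z b, Nat.lt_floor_add_one δ]
  · have h5 : √5 ≤ 9 / 4 := Real.sqrt_le_iff.2 ⟨by norm_num, by norm_num⟩
    have hr' : (1 : ℝ) ≤ r := by exact_mod_cast hr
    have hd : 0 ≤ √d := Real.sqrt_nonneg _
    push_cast
    nlinarith [Nat.floor_le (by positivity : 0 ≤ δ)]

end IntegerPoints

lemma shell_subset_closedBall {X : Type*} [NormedAddCommGroup X] {n : ℕ} {x : X}
    (hx : x ∈ shell X n) : shell X n ⊆ closedBall x (2 ^ (n + 1)) := by
  have hball : shell X n ⊆ ball 0 (2 ^ n) := by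
    unfold shell
    split_ifs with h
    · simp [h]
    · exact sdiff_subset
  intro y hy
  have hx' := mem_ball_zero_iff.1 (hball hx)
  have hy' := mem_ball_zero_iff.1 (hball hy)
  rw [mem_closedBall, dist_eq_norm, pow_succ]
  linarith [norm_sub_le y x]

lemma exists_le_two_pow_lt_measure_closedBall {X : Type*} [NormedAddCommGroup X]
    [MeasurableSpace X] {μ : Measure X} {n : ℕ} (hμ : μ (shell X n)ᶜ = 0) {x : X}
    (hx : x ∈ shell X n) {s c : ℝ} (hs : 0 ≤ s) (hc : 0 ≤ c) {r : ℕ} (hr : 1 ≤ r)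
    (hμr : ENNReal.ofReal (c * ((r : ℝ) / 2 ^ n) ^ s) < μ (ball x r)) :
    ∃ r' : ℕ, 1 ≤ r' ∧ (r' : ℝ) ≤ 2 ^ (n + 1) ∧
      ENNReal.ofReal (c * ((r' : ℝ) / 2 ^ n) ^ s) < μ (closedBall x r') := by
  rcases le_or_gt r (2 ^ (n + 1)) with hle | hgt
  · exact ⟨r, hr, by exact_mod_cast hle, hμr.trans_le (measure_mono ball_subset_closedBall)⟩
  refine ⟨2 ^ (n + 1), Nat.one_le_two_pow, by simp, ?_⟩
  have hfull : μ (closedBall x (2 ^ (n + 1))) = μ univ := measure_congr <| ae_eq_univ.2 <|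
    measure_mono_null (compl_subset_compl.2 (shell_subset_closedBall hx)) hμ
  calc ENNReal.ofReal (c * (((2 ^ (n + 1) : ℕ) : ℝ) / 2 ^ n) ^ s)
      ≤ ENNReal.ofReal (c * ((r : ℝ) / 2 ^ n) ^ s) := by
        gcongr
    _ < μ (ball x r) := hμr
    _ ≤ μ (closedBall x ((2 ^ (n + 1) : ℕ) : ℝ)) := by
        rw [Nat.cast_pow, Nat.cast_ofNat, hfull]
        exact measure_mono (subset_univ _)

lemma Set.PairwiseDisjoint.finite_of_le_measure {ι α : Type*} [MeasurableSpace α]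
    {μ : Measure α} [IsFiniteMeasure μ] {u : Set ι} {B : ι → Set α} (hu : u.PairwiseDisjoint B)
    (hB : ∀ i ∈ u, MeasurableSet (B i)) {ε : ℝ≥0∞} (hε : 0 < ε) (hεB : ∀ i ∈ u, ε ≤ μ (B i)) :
    u.Finite := by
  have hfin := Measure.finite_const_le_meas_of_disjoint_iUnion μ hε (As := fun i : u => B i)
    (fun i => hB i i.2) (fun i j hij => hu i.2 j.2 (Subtype.coe_injective.ne hij))
    (measure_ne_top _ _)
  rw [show {i : u | ε ≤ μ (B i)} = univ from eq_univ_of_forall fun i => hεB i i.2] at hfin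
  exact finite_coe_iff.1 (finite_univ_iff.1 hfin)

lemma exists_finset_pairwiseDisjoint_closedBall_cover {X : Type*} [PseudoMetricSpace X]
    [MeasurableSpace X] [OpensMeasurableSpace X] {μ : Measure X} [IsFiniteMeasure μ] (T : Set X)
    (r : X → ℝ) {R : ℝ} (hrR : ∀ x ∈ T, r x ≤ R) (hr : ∀ x ∈ T, 0 ≤ r x) {ε : ℝ≥0∞} (hε : 0 < ε)
    (hεμ : ∀ x ∈ T, ε ≤ μ (closedBall x (r x))) :
    ∃ t : Finset X, ↑t ⊆ T ∧ (t : Set X).PairwiseDisjoint (fun x => closedBall x (r x)) ∧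
      T ⊆ ⋃ x ∈ t, closedBall x (5 * r x) := by
  obtain ⟨u, huT, hu, hcov⟩ :=
    Vitali.exists_disjoint_subfamily_covering_enlargement_closedBall T id r R hrR 5 (by norm_num)
  have hufin : u.Finite :=
    hu.finite_of_le_measure (fun _ _ => measurableSet_closedBall) hε fun x hx => hεμ x (huT hx)
  refine ⟨hufin.toFinset, by simpa using huT, by simpa using hu, fun x hx => ?_⟩
  obtain ⟨b, hb, hxb⟩ := hcov x hx
  exact mem_iUnion₂.2 ⟨b, hufin.mem_toFinset.2 hb, hxb (mem_closedBall_self (hr x hx))⟩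

lemma nuP_le_sum {d n : ℕ} {ι : Type*} (s : ℝ) (E : Set (EuclideanSpace ℝ (Fin d)))
    (t : Finset ι) (x : ι → EuclideanSpace ℝ (Fin d)) (r : ι → ℕ)
    (hx : ∀ i ∈ t, x i ∈ shell _ n) (hxZ : ∀ i ∈ t, IsIntegerPoint (x i))
    (hr : ∀ i ∈ t, 1 ≤ r i) (hE : E ∩ shell _ n ⊆ ⋃ i ∈ t, ball (x i) (r i)) :
    nuP s n E ≤ ∑ i ∈ t, ENNReal.ofReal (((r i : ℝ) / 2 ^ n) ^ s) := by
  set e := t.equivFin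
  refine sInf_le ⟨t.card, fun k => x (e.symm k), fun k => r (e.symm k),
    ⟨fun k => hx _ (e.symm k).2, fun k => hxZ _ (e.symm k).2, fun k => hr _ (e.symm k).2, ?_⟩, ?_⟩
  · intro y hy
    obtain ⟨i, hi, hyi⟩ := mem_iUnion₂.1 (hE hy)
    exact mem_iUnion.2 ⟨e ⟨i, hi⟩, by simpa using hyi⟩
  · rw [← Finset.sum_coe_sort t]
    exact (e.symm.sum_comp fun i : t => ENNReal.ofReal (((r i : ℝ) / 2 ^ n) ^ s)).symm

lemma nuP_le_sum_of_closedBall_cover {d n : ℕ} {s : ℝ} (hs : 0 ≤ s)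
    (E : Set (EuclideanSpace ℝ (Fin d))) (t : Finset (EuclideanSpace ℝ (Fin d)))
    (r : EuclideanSpace ℝ (Fin d) → ℕ) (ht : ∀ b ∈ t, b ∈ shell _ n) (hr : ∀ b ∈ t, 1 ≤ r b)
    (hE : E ∩ shell _ n ⊆ ⋃ b ∈ t, closedBall b (5 * r b)) :
    nuP s n E ≤ ∑ b ∈ t, ENNReal.ofReal ((5 * (2 + √d / 2) * r b / 2 ^ n) ^ s) := by
  choose! z R hz hzS hR1 hball hRK using fun b (hb : b ∈ t) =>
    exists_isIntegerPoint_ball_superset (hr b hb) (ht b hb)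
  have hcover : E ∩ shell _ n ⊆ ⋃ b ∈ t, ball (z b) (R b) :=
    hE.trans (iUnion₂_mono fun b hb => hball b hb)
  refine (nuP_le_sum s E t z R hzS hz hR1 hcover).trans (Finset.sum_le_sum fun b hb => ?_)
  gcongr
  exact hRK b hb

lemma ofReal_mul_div_rpow {K r a c s : ℝ} (hK : 0 ≤ K) (hr : 0 ≤ r) (ha : 0 < a) (hc : 0 < c) :
    ENNReal.ofReal ((K * r / a) ^ s) =
      ENNReal.ofReal (K ^ s / c) * ENNReal.ofReal (c * (r / a) ^ s) := by
  rw [← ENNReal.ofReal_mul (by positivity), mul_div_assoc, Real.mul_rpow hK (by positivity)]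
  field_simp

theorem stmt8_general (d n : ℕ) (s : ℝ) (hs : 0 ≤ s)
    (μ : Measure (EuclideanSpace ℝ (Fin d)))
    (hμ : μ (shell (EuclideanSpace ℝ (Fin d)) n)ᶜ = 0)
    (E : Set (EuclideanSpace ℝ (Fin d))) (c : ℝ) (hc : 0 < c)
    (h : ∀ x ∈ E ∩ shell (EuclideanSpace ℝ (Fin d)) n, ∃ r : ℕ, 1 ≤ r ∧
      ENNReal.ofReal (c * ((r : ℝ) / 2 ^ n) ^ s) < μ (Metric.ball x (r : ℝ))) :
    nuP s n E ≤ ENNReal.ofReal ((5 * (2 + Real.sqrt d / 2)) ^ s / c)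
      * μ (shell (EuclideanSpace ℝ (Fin d)) n) := by
  set S := shell (EuclideanSpace ℝ (Fin d)) n
  set K : ℝ := 5 * (2 + √d / 2)
  have hμS : μ S = μ univ := measure_congr (ae_eq_univ.2 hμ)
  rcases eq_or_ne (μ S) ∞ with hS | hS
  · rw [hS, ENNReal.mul_top (by positivity)]
    exact le_top
  have : IsFiniteMeasure μ := ⟨hμS ▸ hS.lt_top⟩
  have hcap : ∀ x ∈ E ∩ S, ∃ r : ℕ, 1 ≤ r ∧ (r : ℝ) ≤ 2 ^ (n + 1) ∧
      ENNReal.ofReal (c * ((r : ℝ) / 2 ^ n) ^ s) < μ (closedBall x r) := fun x hx => by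
    obtain ⟨r, hr, hμr⟩ := h x hx
    exact exists_le_two_pow_lt_measure_closedBall hμ hx.2 hs hc.le hr hμr
  choose! r hr1 hrR hrμ using hcap
  obtain ⟨t, htES, ht, hcov⟩ := exists_finset_pairwiseDisjoint_closedBall_cover (μ := μ) (E ∩ S)
    (fun x => (r x : ℝ)) hrR (fun _ _ => Nat.cast_nonneg _)
    (ε := ENNReal.ofReal (c * (1 / 2 ^ n) ^ s)) (by positivity)
    fun x hx => le_trans (by gcongr; exact_mod_cast hr1 x hx) (hrμ x hx).le
  calc nuP s n E ≤ ∑ b ∈ t, ENNReal.ofReal ((K * r b / 2 ^ n) ^ s) :=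
        nuP_le_sum_of_closedBall_cover hs E t r (fun b hb => (htES hb).2)
          (fun b hb => hr1 b (htES hb)) hcov
    _ ≤ ∑ b ∈ t, ENNReal.ofReal (K ^ s / c) * μ (closedBall b (r b)) :=
        Finset.sum_le_sum fun b hb => (ofReal_mul_div_rpow (by positivity) (Nat.cast_nonneg _)
          (by positivity) hc).trans_le (mul_le_mul_right (hrμ b (htES hb)).le _)
    _ = ENNReal.ofReal (K ^ s / c) * μ (⋃ b ∈ t, closedBall b (r b)) := by
        rw [← Finset.mul_sum, measure_biUnion_finset ht fun _ _ => measurableSet_closedBall]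
    _ ≤ ENNReal.ofReal (K ^ s / c) * μ S := by
        rw [hμS]
        exact mul_le_mul_right (measure_mono (subset_univ _)) _

/-- Upper bound for `νₙˢ` from a measure with large balls. -/
theorem stmt8 (d n : ℕ) (s : ℝ) (hs : 0 ≤ s)
    (μ : Measure (EuclideanSpace ℝ (Fin d)))
    (hμ : μ (shell (EuclideanSpace ℝ (Fin d)) n)ᶜ = 0)
    (E : Set (EuclideanSpace ℝ (Fin d))) (hE : MeasurableSet E) (c : ℝ) (hc : 0 < c)
    (h : ∀ x ∈ E ∩ shell (EuclideanSpace ℝ (Fin d)) n, ∃ r : ℕ, 1 ≤ r ∧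
      ENNReal.ofReal (c * ((r : ℝ) / 2 ^ n) ^ s) < μ (Metric.ball x (r : ℝ))) :
    nuP s n E ≤ ENNReal.ofReal ((5 * (2 + Real.sqrt d / 2)) ^ s / c)
      * μ (shell (EuclideanSpace ℝ (Fin d)) n) :=
  stmt8_general d n s hs μ hμ E c hc h
end

section
/- Potential-theoretic lower bound: Let E ⊂ ℝ^d and suppose there exists a Radon measure μ on ℝ^d with μ(E) = +∞ such that Σ_{n≥0} 2^{ns} I_s(μ|_{S_n}) < +∞, where I_s(ν) = ∬ dν(x)dν(y)/(‖x−y‖^s ∨ 1). Then ν̃^s(E) = +∞ and Dim_H(E) ≥ s. -/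
/-!
Cut `ℝᵈ` into the shells `Sₙ` and take a cover of `E ∩ Sₙ` by balls `B(xᵢ, rᵢ)`, made disjoint
as pieces `Aᵢ ⊆ Sₙ`. On `Aᵢ × Aᵢ` the energy kernel is at least `(2rᵢ)^(-s)`, so
`μ(Aᵢ)² ≤ (2rᵢ)^s I_s(μ|Aᵢ) = [2^s (rᵢ/2ⁿ)^s] · [2^(ns) I_s(μ|Aᵢ)]`, and `√(ab) ≤ a + b` gives
`μ(E ∩ Sₙ) ≤ 2^s ν̃ₙ^s(E) + 2^(ns) I_s(μ|Sₙ)`. Summing over `n`, `ν̃^s(E) < ∞` would force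
`μ(E) < ∞`. Finally `ν̃^s ≤ 2^(s-s') ν̃^(s')` for `s' ≤ s`, and a lattice cover gives
`ν̃^(d+1)(E) < ∞`, so every exponent in the infimum defining `Dim_H(E)` is at least `s`.
-/

open Metric Set ENNReal MeasureTheory

/-- The macroscopic `s`-energy of a measure `ν`:
`I_s(ν) = ∬ dν(x) dν(y) / (‖x-y‖^s ∨ 1)`. -/
noncomputable def energy {X : Type*} [NormedAddCommGroup X] [MeasurableSpace X]
    (s : ℝ) (ν : Measure X) : ℝ≥0∞ :=
  ∫⁻ x, ∫⁻ y, ENNReal.ofReal (1 / max (‖x - y‖ ^ s) 1) ∂ν ∂ν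

section Shell

variable {X : Type*} [NormedAddCommGroup X]

lemma shell_subset_ball (n : ℕ) : shell X n ⊆ ball 0 (2 ^ n) := by
  unfold shell
  split_ifs with hn
  · simp [hn]
  · exact sdiff_subset

lemma norm_lt_of_mem_shell {n : ℕ} {x : X} (hx : x ∈ shell X n) : ‖x‖ < 2 ^ n :=
  mem_ball_zero_iff.1 (shell_subset_ball n hx)

lemma iUnion_shell : ⋃ n, shell X n = univ := by
  refine eq_univ_of_forall fun x ↦ mem_iUnion.2 ?_
  classical
  have hex : ∃ n : ℕ, ‖x‖ < 2 ^ n := pow_unbounded_of_one_lt ‖x‖ one_lt_two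
  refine ⟨Nat.find hex, ?_⟩
  unfold shell
  split_ifs with h0
  · simpa [h0] using Nat.find_spec hex
  · exact ⟨mem_ball_zero_iff.2 (Nat.find_spec hex),
      fun h ↦ Nat.find_min hex (Nat.sub_one_lt h0) (mem_ball_zero_iff.1 h)⟩

lemma measurableSet_shell [MeasurableSpace X] [OpensMeasurableSpace X] (n : ℕ) :
    MeasurableSet (shell X n) := by
  unfold shell
  split_ifs
  · exact measurableSet_ball
  · exact measurableSet_ball.diff measurableSet_ball

end Shell

section CoverCost

variable {X : Type*} [NormedAddCommGroup X] {s : ℝ} {n : ℕ} {E : Set X}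

lemma nuT_le_of_cover {ι : Type*} [Fintype ι] {x : ι → X} {r : ι → ℝ}
    (hx : ∀ i, x i ∈ shell X n) (hr : ∀ i, 1 ≤ r i)
    (hcov : E ∩ shell X n ⊆ ⋃ i, ball (x i) (r i)) :
    nuT s n E ≤ ∑ i, ENNReal.ofReal ((r i / 2 ^ n) ^ s) := by
  let e := Fintype.equivFin ι
  refine sInf_le ⟨_, x ∘ e.symm, r ∘ e.symm, fun _ ↦ hx _, fun _ ↦ hr _, ?_,
    (e.symm.sum_comp fun i ↦ ENNReal.ofReal ((r i / 2 ^ n) ^ s)).symm⟩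
  rwa [← e.symm.surjective.iUnion_comp (fun i ↦ ball (x i) (r i))] at hcov

lemma le_mul_nuT_add {a b c : ℝ≥0∞} (hc₀ : c ≠ 0) (hc : c ≠ ⊤)
    (h : ∀ (m : ℕ) (x : Fin m → X) (r : Fin m → ℝ), (∀ i, x i ∈ shell X n) → (∀ i, 1 ≤ r i) →
      E ∩ shell X n ⊆ ⋃ i, ball (x i) (r i) → a ≤ c * ∑ i, ENNReal.ofReal ((r i / 2 ^ n) ^ s) + b) :
    a ≤ c * nuT s n E + b := by
  rw [nuT, sInf_eq_iInf', mul_iInf_of_ne hc₀ hc, iInf_add]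
  exact le_iInf fun ⟨_, m, x, r, hx, hr, hcov, ht⟩ ↦ ht ▸ h m x r hx hr hcov

lemma Real.rpow_le_rpow_sub_mul_rpow {u v K s s' : ℝ} (hu : 0 < u) (huK : u ≤ K) (huv : u ≤ v)
    (hs' : 0 ≤ s') (hss' : s' ≤ s) : u ^ s ≤ K ^ (s - s') * v ^ s' :=
  calc u ^ s = u ^ (s - s') * u ^ s' := by rw [← Real.rpow_add hu, sub_add_cancel]
    _ ≤ K ^ (s - s') * v ^ s' :=
      mul_le_mul (Real.rpow_le_rpow hu.le huK (sub_nonneg.2 hss')) (Real.rpow_le_rpow hu.le huv hs')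
        (by positivity) (Real.rpow_nonneg (hu.le.trans huK) _)

-- Radii may be capped at `2^(n+1)`, so that all ratios `r/2^n` lie in `(0, 2]`.
lemma nuT_le_rpow_mul_nuT {s' : ℝ} (hs' : 0 ≤ s') (hss' : s' ≤ s) :
    nuT s n E ≤ ENNReal.ofReal (2 ^ (s - s')) * nuT s' n E := by
  refine (le_mul_nuT_add (b := 0) (ENNReal.ofReal_pos.2 (by positivity)).ne'
    ENNReal.ofReal_ne_top fun m x r hx hr hcov ↦ ?_).trans_eq (add_zero _)
  let r' i := min (r i) (2 ^ (n + 1))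
  have hcov' : E ∩ shell X n ⊆ ⋃ i, ball (x i) (r' i) := fun y hy ↦ by
    obtain ⟨i, hi⟩ := mem_iUnion.1 (hcov hy)
    refine mem_iUnion.2 ⟨i, mem_ball.2 (lt_min hi ?_)⟩
    calc dist y (x i) ≤ ‖y‖ + ‖x i‖ := (dist_eq_norm y (x i)).trans_le (norm_sub_le _ _)
      _ < 2 ^ n + 2 ^ n := add_lt_add (norm_lt_of_mem_shell hy.2) (norm_lt_of_mem_shell (hx i))
      _ = 2 ^ (n + 1) := by ring
  have hterm : ∀ i, ENNReal.ofReal ((r' i / 2 ^ n) ^ s)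
      ≤ ENNReal.ofReal (2 ^ (s - s')) * ENNReal.ofReal ((r i / 2 ^ n) ^ s') := fun i ↦ by
    rw [← ENNReal.ofReal_mul (by positivity)]
    refine ENNReal.ofReal_le_ofReal (Real.rpow_le_rpow_sub_mul_rpow ?_ ?_ ?_ hs' hss')
    · exact div_pos (one_pos.trans_le (le_min (hr i) (one_le_pow₀ one_le_two))) (by positivity)
    · rw [div_le_iff₀ (by positivity), ← pow_succ']
      exact min_le_right _ _
    · gcongr
      exact min_le_left _ _
  calc nuT s n E ≤ ∑ i, ENNReal.ofReal ((r' i / 2 ^ n) ^ s) :=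
        nuT_le_of_cover hx (fun i ↦ le_min (hr i) (one_le_pow₀ one_le_two)) hcov'
    _ ≤ ∑ i, ENNReal.ofReal (2 ^ (s - s')) * ENNReal.ofReal ((r i / 2 ^ n) ^ s') :=
        Finset.sum_le_sum fun i _ ↦ hterm i
    _ = _ := by rw [← Finset.mul_sum, add_zero]

end CoverCost

lemma ENNReal.le_add_of_mul_self_le_mul {a b c : ℝ≥0∞} (h : a * a ≤ b * c) : a ≤ b + c := by
  by_contra! hlt
  exact (ENNReal.mul_lt_mul (le_self_add.trans_lt hlt) (le_add_self.trans_lt hlt)).not_ge h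

lemma measurableSet_disjointed {α ι : Type*} [MeasurableSpace α] [Preorder ι]
    [LocallyFiniteOrderBot ι] {f : ι → Set α} (hf : ∀ i, MeasurableSet (f i)) (i : ι) :
    MeasurableSet (disjointed f i) := by
  rw [disjointed, Finset.sup_set_eq_biUnion]
  exact (hf i).diff (Finset.measurableSet_biUnion _ fun j _ ↦ hf j)

section Energy

variable {X : Type*} [NormedAddCommGroup X] [MeasurableSpace X] {s : ℝ} (μ : Measure X)

lemma measure_mul_self_le_energy (hs : 0 ≤ s) {A : Set X} (hA : MeasurableSet A) {x : X} {r : ℝ}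
    (hAr : A ⊆ ball x r) (hr : 1 ≤ 2 * r) :
    μ A * μ A ≤ ENNReal.ofReal ((2 * r) ^ s) * energy s (μ.restrict A) := by
  set R := (2 * r) ^ s
  have hR : 1 ≤ R := Real.one_le_rpow hr hs
  have hkernel : ∀ a ∈ A, ∀ b ∈ A, ENNReal.ofReal (1 / R) ≤ ENNReal.ofReal (1 / max (‖a - b‖ ^ s) 1) :=
    fun a ha b hb ↦ by
      have hab : ‖a - b‖ ≤ 2 * r := by
        rw [← dist_eq_norm, two_mul]
        exact (dist_triangle_right a b x).trans (add_le_add (hAr ha).le (hAr hb).le)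
      refine ENNReal.ofReal_le_ofReal (one_div_le_one_div_of_le (by positivity) (max_le ?_ hR))
      exact Real.rpow_le_rpow (norm_nonneg _) hab hs
  have hlower : ENNReal.ofReal (1 / R) * (μ A * μ A) ≤ energy s (μ.restrict A) :=
    calc ENNReal.ofReal (1 / R) * (μ A * μ A)
        = ∫⁻ _ in A, ∫⁻ _ in A, ENNReal.ofReal (1 / R) ∂μ ∂μ := by
          simp only [setLIntegral_const, mul_assoc]
      _ ≤ energy s (μ.restrict A) :=
          setLIntegral_mono' hA fun a ha ↦ setLIntegral_mono' hA fun b hb ↦ hkernel a ha b hb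
  calc μ A * μ A = ENNReal.ofReal R * ENNReal.ofReal (1 / R) * (μ A * μ A) := by
        rw [← ENNReal.ofReal_mul (by positivity), mul_one_div_cancel (by positivity),
          ENNReal.ofReal_one, one_mul]
    _ ≤ ENNReal.ofReal R * energy s (μ.restrict A) := by
        rw [mul_assoc]
        exact mul_le_mul_right hlower _

lemma tsum_energy_restrict_le {ι : Type*} [Countable ι] {A : ι → Set X} {S : Set X}
    (hA : ∀ i, MeasurableSet (A i)) (hdisj : Pairwise (Function.onFun Disjoint A)) (hAS : ∀ i, A i ⊆ S) :
    ∑' i, energy s (μ.restrict (A i)) ≤ energy s (μ.restrict S) :=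
  calc ∑' i, energy s (μ.restrict (A i))
      ≤ ∑' i, ∫⁻ a in A i, ∫⁻ b in S, ENNReal.ofReal (1 / max (‖a - b‖ ^ s) 1) ∂μ ∂μ :=
        ENNReal.tsum_le_tsum fun i ↦ lintegral_mono fun _ ↦ lintegral_mono_set (hAS i)
    _ = ∫⁻ a in ⋃ i, A i, ∫⁻ b in S, ENNReal.ofReal (1 / max (‖a - b‖ ^ s) 1) ∂μ ∂μ :=
        (lintegral_iUnion hA hdisj _).symm
    _ ≤ energy s (μ.restrict S) := lintegral_mono_set (iUnion_subset hAS)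

lemma ofReal_two_mul_rpow {r : ℝ} (hr : 0 ≤ r) (s : ℝ) (n : ℕ) :
    ENNReal.ofReal ((2 * r) ^ s)
      = ENNReal.ofReal (2 ^ s) * ENNReal.ofReal ((r / 2 ^ n) ^ s) * 2 ^ ((n : ℝ) * s) := by
  have h2n : (0 : ℝ) < 2 ^ n := by positivity
  have h2ns : (2 : ℝ≥0∞) ^ ((n : ℝ) * s) = ENNReal.ofReal ((2 ^ n) ^ s) := by
    rw [← ENNReal.ofReal_rpow_of_pos h2n, ENNReal.ofReal_pow zero_le_two, ENNReal.ofReal_ofNat,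
      ← ENNReal.rpow_natCast, ← ENNReal.rpow_mul]
  rw [h2ns, ← ENNReal.ofReal_mul (by positivity), ← ENNReal.ofReal_mul (by positivity),
    ← Real.mul_rpow zero_le_two (by positivity), ← Real.mul_rpow (by positivity) h2n.le,
    mul_assoc, div_mul_cancel₀ _ h2n.ne']

variable [OpensMeasurableSpace X]

lemma measure_inter_shell_le_of_cover (hs : 0 ≤ s) {E : Set X} {n m : ℕ} {x : Fin m → X}
    {r : Fin m → ℝ} (hr : ∀ i, 1 ≤ r i) (hcov : E ∩ shell X n ⊆ ⋃ i, ball (x i) (r i)) :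
    μ (E ∩ shell X n) ≤ ENNReal.ofReal (2 ^ s) * ∑ i, ENNReal.ofReal ((r i / 2 ^ n) ^ s)
      + 2 ^ ((n : ℝ) * s) * energy s (μ.restrict (shell X n)) := by
  set A := disjointed fun i ↦ ball (x i) (r i) ∩ shell X n
  have hA : ∀ i, MeasurableSet (A i) :=
    measurableSet_disjointed fun i ↦ measurableSet_ball.inter (measurableSet_shell n)
  have hpiece : ∀ i, μ (A i) ≤ ENNReal.ofReal (2 ^ s) * ENNReal.ofReal ((r i / 2 ^ n) ^ s)
      + 2 ^ ((n : ℝ) * s) * energy s (μ.restrict (A i)) := fun i ↦ by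
    refine ENNReal.le_add_of_mul_self_le_mul ?_
    rw [← mul_assoc, ← ofReal_two_mul_rpow (by linarith [hr i])]
    exact measure_mul_self_le_energy μ hs (hA i) ((disjointed_subset _ i).trans inter_subset_left)
      (by linarith [hr i])
  calc μ (E ∩ shell X n) ≤ μ (⋃ i, A i) := by
        refine measure_mono fun y hy ↦ ?_
        rw [iUnion_disjointed, ← iUnion_inter]
        exact ⟨hcov hy, hy.2⟩
    _ ≤ ∑ i, μ (A i) := measure_iUnion_fintype_le μ A
    _ ≤ ∑ i, (ENNReal.ofReal (2 ^ s) * ENNReal.ofReal ((r i / 2 ^ n) ^ s)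
          + 2 ^ ((n : ℝ) * s) * energy s (μ.restrict (A i))) :=
        Finset.sum_le_sum fun i _ ↦ hpiece i
    _ = ENNReal.ofReal (2 ^ s) * ∑ i, ENNReal.ofReal ((r i / 2 ^ n) ^ s)
          + 2 ^ ((n : ℝ) * s) * ∑' i, energy s (μ.restrict (A i)) := by
        rw [Finset.sum_add_distrib, ← Finset.mul_sum, ← Finset.mul_sum, tsum_fintype]
    _ ≤ _ := by
        gcongr
        exact tsum_energy_restrict_le μ hA (disjoint_disjointed _)
          fun i ↦ (disjointed_subset _ i).trans inter_subset_right

lemma measure_inter_shell_le (hs : 0 ≤ s) (E : Set X) (n : ℕ) :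
    μ (E ∩ shell X n) ≤ ENNReal.ofReal (2 ^ s) * nuT s n E
      + 2 ^ ((n : ℝ) * s) * energy s (μ.restrict (shell X n)) :=
  le_mul_nuT_add (ENNReal.ofReal_pos.2 (by positivity)).ne' ENNReal.ofReal_ne_top
    fun _ _ _ _ hr hcov ↦ measure_inter_shell_le_of_cover μ hs hr hcov

theorem tsum_nuT_eq_top (hs : 0 ≤ s) {E : Set X} (hμE : μ E = ⊤)
    (hI : ∑' n : ℕ, (2 : ℝ≥0∞) ^ ((n : ℝ) * s) * energy s (μ.restrict (shell X n)) < ⊤) :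
    ∑' n, nuT s n E = ⊤ := by
  by_contra hT
  have hsplit : μ E ≤ ∑' n, μ (E ∩ shell X n) :=
    calc μ E = μ (⋃ n, E ∩ shell X n) := by rw [← inter_iUnion, iUnion_shell, inter_univ]
      _ ≤ _ := measure_iUnion_le _
  have hfin : ∑' n, μ (E ∩ shell X n) < ⊤ :=
    calc ∑' n, μ (E ∩ shell X n)
        ≤ ∑' n, (ENNReal.ofReal (2 ^ s) * nuT s n E
          + 2 ^ ((n : ℝ) * s) * energy s (μ.restrict (shell X n))) :=
          ENNReal.tsum_le_tsum fun n ↦ measure_inter_shell_le μ hs E n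
      _ = ENNReal.ofReal (2 ^ s) * ∑' n, nuT s n E
          + ∑' n : ℕ, 2 ^ ((n : ℝ) * s) * energy s (μ.restrict (shell X n)) := by
          rw [ENNReal.tsum_add, ENNReal.tsum_mul_left]
      _ < ⊤ := ENNReal.add_lt_top.2 ⟨ENNReal.mul_lt_top ENNReal.ofReal_lt_top
          (lt_top_iff_ne_top.2 hT), hI⟩
  exact (hμE ▸ hsplit).not_gt hfin

end Energy

section Lattice

variable {d : ℕ}

lemma dist_lt_of_floor_eq {y z : EuclideanSpace ℝ (Fin d)} (h : ∀ j, ⌊y j⌋ = ⌊z j⌋) :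
    dist y z < d + 1 := by
  have hcoord : ∀ j, dist (y j) (z j) ^ 2 ≤ 1 := fun j ↦ by
    rw [sq_le_one_iff_abs_le_one, Real.dist_eq, abs_abs]
    exact (Int.abs_sub_lt_one_of_floor_eq_floor (h j)).le
  calc dist y z = √(∑ j, dist (y j) (z j) ^ 2) := EuclideanSpace.dist_eq y z
    _ ≤ √(∑ _j : Fin d, 1) := Real.sqrt_le_sqrt (Finset.sum_le_sum fun j _ ↦ hcoord j)
    _ = √d := by simp
    _ < d + 1 := (Real.sqrt_lt' (by positivity)).2 (by nlinarith)

lemma floor_mem_Ico_of_abs_lt {t : ℝ} {N : ℕ} (ht : |t| < N) : ⌊t⌋ ∈ Finset.Ico (-(N : ℤ)) N := by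
  rw [Finset.mem_Ico, Int.le_floor, Int.floor_lt]
  push_cast
  constructor <;> linarith [abs_lt.1 ht]

-- One ball of radius `d + 1` around a point of `E ∩ Sₙ` in each unit lattice cube meeting it;
-- there are at most `(2 · 2ⁿ)ᵈ` such cubes.
lemma nuT_natCast_succ_le (n : ℕ) (E : Set (EuclideanSpace ℝ (Fin d))) :
    nuT ((d + 1 : ℕ) : ℝ) n E ≤ ENNReal.ofReal ((2 * 2 ^ n) ^ d * ((d + 1) / 2 ^ n) ^ (d + 1)) := by
  classical
  set N : ℕ := 2 ^ n with hN
  let floorPt : EuclideanSpace ℝ (Fin d) → Fin d → ℤ := fun y j ↦ ⌊y j⌋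
  let box := Fintype.piFinset fun _ : Fin d ↦ Finset.Ico (-(N : ℤ)) N
  have hbox : ∀ y ∈ E ∩ shell _ n, floorPt y ∈ box := fun y hy ↦
    Fintype.mem_piFinset.2 fun j ↦ floor_mem_Ico_of_abs_lt <|
      (PiLp.norm_apply_le y j).trans_lt (by simpa [hN] using norm_lt_of_mem_shell hy.2)
  let Z := box.filter (· ∈ floorPt '' (E ∩ shell _ n))
  have hZ : ∀ z : Z, ∃ y ∈ E ∩ shell _ n, floorPt y = z := fun z ↦ (Finset.mem_filter.1 z.2).2
  choose c hcE hcz using hZ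
  have hcov : E ∩ shell _ n ⊆ ⋃ z : Z, ball (c z) ((d + 1 : ℕ) : ℝ) := fun y hy ↦ by
    let z : Z := ⟨floorPt y, Finset.mem_filter.2 ⟨hbox y hy, y, hy, rfl⟩⟩
    refine mem_iUnion.2 ⟨z, mem_ball.2 ?_⟩
    exact_mod_cast dist_lt_of_floor_eq fun j ↦ (congrFun (hcz z) j).symm
  have hcard : (box.card : ℝ) = (2 * 2 ^ n) ^ d := by
    rw [Fintype.card_piFinset, Finset.prod_const, Finset.card_univ, Fintype.card_fin, Int.card_Ico,
      show ((N : ℤ) - -(N : ℤ)).toNat = 2 * N by omega]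
    push_cast [hN]
    ring
  calc nuT _ n E ≤ ∑ _z : Z, ENNReal.ofReal ((((d + 1 : ℕ) : ℝ) / 2 ^ n) ^ ((d + 1 : ℕ) : ℝ)) :=
        nuT_le_of_cover (fun z ↦ (hcE z).2) (fun _ ↦ by norm_cast; omega) hcov
    _ = Z.card * ENNReal.ofReal (((d + 1) / 2 ^ n) ^ (d + 1)) := by
        rw [Finset.sum_const, Finset.card_univ, Fintype.card_coe, nsmul_eq_mul, Real.rpow_natCast]
        push_cast
        rfl
    _ ≤ box.card * ENNReal.ofReal (((d + 1) / 2 ^ n) ^ (d + 1)) := by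
        gcongr
        exact Finset.filter_subset _ _
    _ = _ := by rw [← ENNReal.ofReal_natCast, ← ENNReal.ofReal_mul (by positivity), hcard]

lemma tsum_nuT_natCast_succ_lt_top (E : Set (EuclideanSpace ℝ (Fin d))) :
    ∑' n, nuT ((d + 1 : ℕ) : ℝ) n E < ⊤ := by
  have hterm : ∀ n : ℕ, (2 * 2 ^ n) ^ d * ((d + 1) / 2 ^ n) ^ (d + 1)
      = 2 ^ d * (d + 1) ^ (d + 1) * (1 / 2 : ℝ) ^ n := fun n ↦ by
    rw [one_div_pow, mul_pow, div_pow, pow_succ ((2 : ℝ) ^ n)]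
    field_simp
  calc ∑' n, nuT _ n E ≤ ∑' n : ℕ, ENNReal.ofReal (2 ^ d * (d + 1) ^ (d + 1) * (1 / 2 : ℝ) ^ n) :=
        ENNReal.tsum_le_tsum fun n ↦ (nuT_natCast_succ_le n E).trans_eq (by rw [hterm])
    _ = ENNReal.ofReal (∑' n : ℕ, 2 ^ d * (d + 1) ^ (d + 1) * (1 / 2 : ℝ) ^ n) :=
        (ENNReal.ofReal_tsum_of_nonneg (fun n ↦ by positivity)
          (summable_geometric_two.mul_left _)).symm
    _ < ⊤ := ENNReal.ofReal_lt_top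

lemma le_macroDim_of_tsum_nuT_eq_top {E : Set (EuclideanSpace ℝ (Fin d))} {s : ℝ}
    (h : ∑' n, nuT s n E = ⊤) : s ≤ macroDim E := by
  -- `sInf ∅ = 0` in `ℝ`, so the lattice cover is needed to make the set nonempty.
  refine le_csInf ⟨_, Nat.cast_nonneg _, tsum_nuT_natCast_succ_lt_top E⟩ fun s' ⟨hs', hfin⟩ ↦ ?_
  by_contra! hlt
  have htop : ⊤ ≤ ENNReal.ofReal (2 ^ (s - s')) * ∑' n, nuT s' n E :=
    calc ⊤ = ∑' n, nuT s n E := h.symm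
      _ ≤ ∑' n, ENNReal.ofReal (2 ^ (s - s')) * nuT s' n E :=
          ENNReal.tsum_le_tsum fun _ ↦ nuT_le_rpow_mul_nuT hs' hlt.le
      _ = _ := ENNReal.tsum_mul_left
  exact (ENNReal.mul_lt_top ENNReal.ofReal_lt_top hfin).not_ge htop

end Lattice

theorem stmt13_general (d : ℕ) (E : Set (EuclideanSpace ℝ (Fin d))) (s : ℝ) (hs : 0 ≤ s)
    (μ : Measure (EuclideanSpace ℝ (Fin d)))
    (hμE : μ E = ⊤)
    (hI : ∑' n : ℕ, (2 : ℝ≥0∞) ^ ((n : ℝ) * s)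
        * energy s (μ.restrict (shell (EuclideanSpace ℝ (Fin d)) n)) < ⊤) :
    (∑' n, nuT s n E = ⊤) ∧ s ≤ macroDim E := by
  have hnuT := tsum_nuT_eq_top μ hs hμE hI
  exact ⟨hnuT, le_macroDim_of_tsum_nuT_eq_top hnuT⟩

/-- Potential-theoretic lower bound: a Radon measure of infinite mass on `E` with
`Σₙ 2^{ns} I_s(μ|_{Sₙ}) < ∞` forces `ν̃^s(E) = ∞` and `Dim_H(E) ≥ s`. -/
theorem stmt13 (d : ℕ) (E : Set (EuclideanSpace ℝ (Fin d))) (s : ℝ) (hs : 0 ≤ s)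
    (μ : Measure (EuclideanSpace ℝ (Fin d))) [IsLocallyFiniteMeasure μ]
    (hμE : μ E = ⊤)
    (hI : ∑' n : ℕ, (2 : ℝ≥0∞) ^ ((n : ℝ) * s)
        * energy s (μ.restrict (shell (EuclideanSpace ℝ (Fin d)) n)) < ⊤) :
    (∑' n, nuT s n E = ⊤) ∧ s ≤ macroDim E :=
  stmt13_general d E s hs μ hμE hI
end
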